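/- The cone of separable hermitian 2-forms on H = K ⊗ L has nonempty interior in the real vector space of all hermitian 2-forms on H. Equivalently, the separable forms span the whole space of hermitian 2-forms. -/

import Mathlib

open scoped TensorProduct ComplexConjugate
open Finset

variable {K L : Type*} [AddCommGroup K] [Module ℂ K] [FiniteDimensional ℂ K]
  [AddCommGroup L] [Module ℂ L] [FiniteDimensional ℂ L]

/-- The linear functional `φ ⊗ ψ` on `K ⊗[ℂ] L`. -/
noncomputable def prodFun (φ : K →ₗ[ℂ] ℂ) (ψ : L →ₗ[ℂ] ℂ) : (K ⊗[ℂ] L) →ₗ[ℂ] ℂ :=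
  (TensorProduct.lid ℂ ℂ).toLinearMap ∘ₗ TensorProduct.map φ ψ

/-- Hermitian tensor product of two linear functionals. -/
noncomputable def hermOdot (α β : (K ⊗[ℂ] L) →ₗ[ℂ] ℂ) :
    (K ⊗[ℂ] L) → (K ⊗[ℂ] L) → ℂ :=
  fun z w => (conj (α z) * β w + conj (β z) * α w) / 2

/-- A hermitian 2-form on `K ⊗ L` is separable if it is a finite sum of product forms. -/
def IsSepForm (ρ : (K ⊗[ℂ] L) → (K ⊗[ℂ] L) → ℂ) : Prop :=
  ∃ (P : ℕ) (φ : Fin P → (K →ₗ[ℂ] ℂ)) (ψ : Fin P → (L →ₗ[ℂ] ℂ)),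
    ρ = fun z w => ∑ p, hermOdot (prodFun (φ p) (ψ p)) (prodFun (φ p) (ψ p)) z w


/-- A hermitian 2-form: sesquilinear (conjugate-linear in the first slot,
linear in the second) with hermitian symmetry. -/
def IsHermForm (ρ : (K ⊗[ℂ] L) → (K ⊗[ℂ] L) → ℂ) : Prop :=
  (∀ z w w', ρ z (w + w') = ρ z w + ρ z w') ∧
  (∀ (c : ℂ) z w, ρ z (c • w) = c * ρ z w) ∧
  (∀ z z' w, ρ (z + z') w = ρ z w + ρ z' w) ∧
  (∀ (c : ℂ) z w, ρ (c • z) w = conj c * ρ z w) ∧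
  (∀ z w, ρ w z = conj (ρ z w))

/-!
Expanding a hermitian form in a product basis `eᵢ ⊗ fₖ` of `K ⊗ L` writes it as a real
combination of the forms `α ⊙ β` and `α ⊙ (i β)`, with `α`, `β` tensor products of coordinate
functionals. Every such `(φ₁ ⊗ ψ₁) ⊙ (φ₂ ⊗ ψ₂)` is a real combination of squares
`(φ ⊗ ψ) ⊙ (φ ⊗ ψ)`: real polarization handles two product functionals sharing a factor, and
expanding the square of `(φ₁ + φ₂) ⊗ (ψ₁ + ψ₂)` once as it is and once with `φ₂ ↦ i φ₂`,
`ψ₂ ↦ -i ψ₂` isolates the cross term `(φ₁ ⊗ ψ₁) ⊙ (φ₂ ⊗ ψ₂)`.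
-/

open Complex

section

variable {V W : Type*} [AddCommGroup V] [Module ℂ V] [AddCommGroup W] [Module ℂ W]

lemma prodFun_tmul (φ : V →ₗ[ℂ] ℂ) (ψ : W →ₗ[ℂ] ℂ) (x : V) (y : W) :
    prodFun φ ψ (x ⊗ₜ y) = φ x * ψ y := by
  simp [prodFun]

lemma prodFun_add_left (φ φ' : V →ₗ[ℂ] ℂ) (ψ : W →ₗ[ℂ] ℂ) :
    prodFun (φ + φ') ψ = prodFun φ ψ + prodFun φ' ψ := by
  simp only [prodFun, TensorProduct.map_add_left, LinearMap.comp_add]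

lemma prodFun_add_right (φ : V →ₗ[ℂ] ℂ) (ψ ψ' : W →ₗ[ℂ] ℂ) :
    prodFun φ (ψ + ψ') = prodFun φ ψ + prodFun φ ψ' := by
  simp only [prodFun, TensorProduct.map_add_right, LinearMap.comp_add]

lemma prodFun_sub_left (φ φ' : V →ₗ[ℂ] ℂ) (ψ : W →ₗ[ℂ] ℂ) :
    prodFun (φ - φ') ψ = prodFun φ ψ - prodFun φ' ψ :=
  TensorProduct.ext' fun x y => by simp only [prodFun_tmul, LinearMap.sub_apply, sub_mul]

lemma prodFun_sub_right (φ : V →ₗ[ℂ] ℂ) (ψ ψ' : W →ₗ[ℂ] ℂ) :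
    prodFun φ (ψ - ψ') = prodFun φ ψ - prodFun φ ψ' :=
  TensorProduct.ext' fun x y => by simp only [prodFun_tmul, LinearMap.sub_apply, mul_sub]

lemma prodFun_smul_left (c : ℂ) (φ : V →ₗ[ℂ] ℂ) (ψ : W →ₗ[ℂ] ℂ) :
    prodFun (c • φ) ψ = c • prodFun φ ψ := by
  simp only [prodFun, TensorProduct.map_smul_left, LinearMap.comp_smul]

lemma prodFun_smul_right (c : ℂ) (φ : V →ₗ[ℂ] ℂ) (ψ : W →ₗ[ℂ] ℂ) :
    prodFun φ (c • ψ) = c • prodFun φ ψ := by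
  simp only [prodFun, TensorProduct.map_smul_right, LinearMap.comp_smul]

lemma hermOdot_polarization (α β : (V ⊗[ℂ] W) →ₗ[ℂ] ℂ) :
    hermOdot α β = (4⁻¹ : ℝ) • (hermOdot (α + β) (α + β) - hermOdot (α - β) (α - β)) := by
  funext z w
  simp only [hermOdot, Pi.smul_apply, Pi.sub_apply, LinearMap.add_apply, LinearMap.sub_apply,
    map_add, map_sub, real_smul]
  push_cast
  ring

lemma hermOdot_smul_smul {c d : ℂ} {r : ℝ} (h : conj c * d = r) (α β : (V ⊗[ℂ] W) →ₗ[ℂ] ℂ) :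
    hermOdot (c • α) (d • β) = r • hermOdot α β := by
  have h' : conj d * c = r := by simpa [mul_comm] using congrArg conj h
  funext z w
  simp only [hermOdot, Pi.smul_apply, LinearMap.smul_apply, smul_eq_mul, map_mul,
    real_smul]
  linear_combination (conj (α z) * β w / 2) * h + (conj (β z) * α w / 2) * h'

noncomputable def sepSpan : Submodule ℝ ((V ⊗[ℂ] W) → (V ⊗[ℂ] W) → ℂ) :=
  Submodule.span ℝ {σ | IsSepForm σ}

lemma hermOdot_prodFun_self_mem (φ : V →ₗ[ℂ] ℂ) (ψ : W →ₗ[ℂ] ℂ) :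
    hermOdot (prodFun φ ψ) (prodFun φ ψ) ∈ sepSpan :=
  Submodule.subset_span ⟨1, fun _ => φ, fun _ => ψ, by simp⟩

lemma hermOdot_prodFun_common_right_mem (φ φ' : V →ₗ[ℂ] ℂ) (ψ : W →ₗ[ℂ] ℂ) :
    hermOdot (prodFun φ ψ) (prodFun φ' ψ) ∈ sepSpan := by
  rw [hermOdot_polarization, ← prodFun_add_left, ← prodFun_sub_left]
  exact Submodule.smul_mem _ _
    (sub_mem (hermOdot_prodFun_self_mem _ _) (hermOdot_prodFun_self_mem _ _))

lemma hermOdot_prodFun_common_left_mem (φ : V →ₗ[ℂ] ℂ) (ψ ψ' : W →ₗ[ℂ] ℂ) :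
    hermOdot (prodFun φ ψ) (prodFun φ ψ') ∈ sepSpan := by
  rw [hermOdot_polarization, ← prodFun_add_right, ← prodFun_sub_right]
  exact Submodule.smul_mem _ _
    (sub_mem (hermOdot_prodFun_self_mem _ _) (hermOdot_prodFun_self_mem _ _))

lemma hermOdot_prodFun_add_swap_mem (φ₁ φ₂ : V →ₗ[ℂ] ℂ) (ψ₁ ψ₂ : W →ₗ[ℂ] ℂ) :
    hermOdot (prodFun φ₁ ψ₁) (prodFun φ₂ ψ₂) + hermOdot (prodFun φ₁ ψ₂) (prodFun φ₂ ψ₁)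
      ∈ sepSpan := by
  set x := prodFun φ₁ ψ₁
  set y := prodFun φ₂ ψ₂
  set p := prodFun φ₁ ψ₂
  set q := prodFun φ₂ ψ₁
  have hexpand : prodFun (φ₁ + φ₂) (ψ₁ + ψ₂) = x + p + q + y := by
    rw [prodFun_add_left, prodFun_add_right, prodFun_add_right]
    abel
  have hsplit : hermOdot x y + hermOdot p q =
      (2⁻¹ : ℝ) • (hermOdot (prodFun (φ₁ + φ₂) (ψ₁ + ψ₂)) (prodFun (φ₁ + φ₂) (ψ₁ + ψ₂))
          - hermOdot x x - hermOdot y y - hermOdot p p - hermOdot q q)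
        - (hermOdot x p + hermOdot x q + hermOdot y p + hermOdot y q) := by
    rw [hexpand]
    funext z w
    simp only [hermOdot, Pi.add_apply, Pi.sub_apply, Pi.smul_apply, LinearMap.add_apply, map_add,
      real_smul]
    push_cast
    ring
  rw [hsplit]
  have hplus := hermOdot_prodFun_self_mem (φ₁ + φ₂) (ψ₁ + ψ₂)
  have hx := hermOdot_prodFun_self_mem φ₁ ψ₁
  have hy := hermOdot_prodFun_self_mem φ₂ ψ₂
  have hp := hermOdot_prodFun_self_mem φ₁ ψ₂
  have hq := hermOdot_prodFun_self_mem φ₂ ψ₁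
  have hxp := hermOdot_prodFun_common_left_mem φ₁ ψ₁ ψ₂
  have hxq := hermOdot_prodFun_common_right_mem φ₁ φ₂ ψ₁
  have hyp := hermOdot_prodFun_common_right_mem φ₂ φ₁ ψ₂
  have hyq := hermOdot_prodFun_common_left_mem φ₂ ψ₂ ψ₁
  exact sub_mem (Submodule.smul_mem _ _ (sub_mem (sub_mem (sub_mem (sub_mem hplus hx) hy) hp) hq))
    (add_mem (add_mem (add_mem hxp hxq) hyp) hyq)

lemma hermOdot_prodFun_mem (φ₁ φ₂ : V →ₗ[ℂ] ℂ) (ψ₁ ψ₂ : W →ₗ[ℂ] ℂ) :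
    hermOdot (prodFun φ₁ ψ₁) (prodFun φ₂ ψ₂) ∈ sepSpan := by
  have hsum := hermOdot_prodFun_add_swap_mem φ₁ φ₂ ψ₁ ψ₂
  have hdiff := hermOdot_prodFun_add_swap_mem φ₁ (I • φ₂) ψ₁ (-I • ψ₂)
  have hI : conj (-I) * I = ((-1 : ℝ) : ℂ) := by simp
  rw [prodFun_smul_left, prodFun_smul_right, prodFun_smul_right, prodFun_smul_left, smul_smul,
    mul_neg, I_mul_I, neg_neg, one_smul, hermOdot_smul_smul hI] at hdiff
  convert Submodule.smul_mem _ (2⁻¹ : ℝ) (add_mem hsum hdiff) using 1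
  module

lemma hermOdot_re_add_im (α β : (V ⊗[ℂ] W) →ₗ[ℂ] ℂ) (m : ℂ) (z w : V ⊗[ℂ] W) :
    (conj (α z) * β w * m + conj (conj (α w) * β z * m)) / 2
      = m.re * hermOdot α β z w + m.im * hermOdot α (I • β) z w := by
  simp only [hermOdot, LinearMap.smul_apply, smul_eq_mul, map_mul, conj_conj, conj_I]
  linear_combination (norm := (push_cast; ring_nf))
    (conj (α z) * β w + conj (β z) * α w) / 4 * add_conj m
      + (conj (α z) * β w - conj (β z) * α w) / 4 * sub_conj m

lemma IsHermForm.eq_sum_mul_repr {ρ : (V ⊗[ℂ] W) → (V ⊗[ℂ] W) → ℂ} (hρ : IsHermForm ρ)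
    {ι : Type*} [Fintype ι] (b : Module.Basis ι ℂ (V ⊗[ℂ] W)) (z w : V ⊗[ℂ] W) :
    ρ z w = ∑ i, ∑ j, conj (b.repr z i) * b.repr w j * ρ (b i) (b j) := by
  let B := LinearMap.mk₂'ₛₗ (starRingEnd ℂ) (RingHom.id ℂ) ρ hρ.2.2.1 hρ.2.2.2.1 hρ.1 hρ.2.1
  change B z w = _
  rw [← LinearMap.sum_repr_mul_repr_mulₛₗ b b z w]
  simp [B, Finsupp.sum_fintype, mul_assoc]

lemma IsHermForm.eq_sum_hermOdot {ρ : (V ⊗[ℂ] W) → (V ⊗[ℂ] W) → ℂ} (hρ : IsHermForm ρ)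
    {ι : Type*} [Fintype ι] (b : Module.Basis ι ℂ (V ⊗[ℂ] W)) :
    ρ = ∑ i, ∑ j, ((ρ (b i) (b j)).re • hermOdot (b.coord i) (b.coord j)
      + (ρ (b i) (b j)).im • hermOdot (b.coord i) (I • b.coord j)) := by
  funext z w
  have hsymm : ρ z w = (ρ z w + conj (ρ w z)) / 2 := by
    rw [← hρ.2.2.2.2 w z]
    ring
  rw [hsymm, hρ.eq_sum_mul_repr b z w, hρ.eq_sum_mul_repr b w z, map_sum, ← sum_add_distrib,
    sum_div, Finset.sum_apply, Finset.sum_apply]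
  refine sum_congr rfl fun i _ => ?_
  rw [map_sum, ← sum_add_distrib, sum_div, Finset.sum_apply, Finset.sum_apply]
  refine sum_congr rfl fun j _ => ?_
  simpa only [Module.Basis.coord_apply, Pi.add_apply, Pi.smul_apply, real_smul]
    using hermOdot_re_add_im (b.coord i) (b.coord j) (ρ (b i) (b j)) z w

lemma Module.Basis.coord_tensorProduct_eq_prodFun {ι κ : Type*} (bV : Module.Basis ι ℂ V)
    (bW : Module.Basis κ ℂ W) (i : ι × κ) :
    (bV.tensorProduct bW).coord i = prodFun (bV.coord i.1) (bW.coord i.2) := by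
  refine (bV.tensorProduct bW).ext fun j => ?_
  rw [Module.Basis.tensorProduct_apply', Module.Basis.coord_apply,
    Module.Basis.tensorProduct_repr_tmul_apply, prodFun_tmul, smul_eq_mul, mul_comm]
  rfl

end

/-- the separable forms span the whole real vector space of
hermitian 2-forms (equivalently the separable cone has nonempty interior). -/
theorem sepForms_span (ρ : (K ⊗[ℂ] L) → (K ⊗[ℂ] L) → ℂ) (hρ : IsHermForm ρ) :
    ρ ∈ Submodule.span ℝ {σ : (K ⊗[ℂ] L) → (K ⊗[ℂ] L) → ℂ | IsSepForm σ} := by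
  let b := (Module.finBasis ℂ K).tensorProduct (Module.finBasis ℂ L)
  change ρ ∈ sepSpan
  rw [hρ.eq_sum_hermOdot b]
  refine sum_mem fun i _ => sum_mem fun j _ => add_mem ?_ ?_ <;> refine Submodule.smul_mem _ _ ?_
  · simp only [b, Module.Basis.coord_tensorProduct_eq_prodFun]
    exact hermOdot_prodFun_mem _ _ _ _
  · simp only [b, Module.Basis.coord_tensorProduct_eq_prodFun, ← prodFun_smul_left]
    exact hermOdot_prodFun_mem _ _ _ _
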